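/- Let k ≥ 1, let W be a channel from [2k] to a finite alphabet 𝒴, and let p be a probability distribution on [2k] satisfying p(2i−1) + p(2i) = 1/k for every i ∈ {1,…,k}. Define v ∈ ℝ^k by v_i = k·(p(2i−1) − p(2i)), let u be the uniform distribution on [2k], and write W∘p for the output distribution y ↦ Σ_{x∈[2k]} p(x) W(y|x). Then χ²(W∘p ‖ W∘u) = (1/(2k)) · vᵀ H(W) v; in particular, χ²(W∘p ‖ W∘u) ≤ (1/(2k)) · ‖H(W)‖_op · ‖v‖₂². -/

import Mathlib

/-!
Because `p(2i−1) + p(2i) = 1/k`, the perturbation `p − u` puts mass `± v_i / (2k)` on the pair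
`{2i−1, 2i}`, so `W∘p − W∘u = (1/2k) Σ_i v_i (W(·|2i−1) − W(·|2i))`, while
`W∘u = (1/2k) Σ_x W(·|x)`. Substituting into `χ²` turns it into `(1/2k)` times the quadratic form
of the Gram matrix `H(W)` of the differences `W(·|2i−1) − W(·|2i)` in the weights
`1 / Σ_x W(·|x)`. The bound is then `vᵀ H v ≤ λ_max(H) ‖v‖²`, which holds because
`λ_max • 1 − H` is positive semidefinite by the spectral theorem.
-/

open Finset

namespace Paper

/-- A probability distribution on a finite type, given by its mass function. -/
def IsDist {α : Type*} [Fintype α] (p : α → ℝ) : Prop :=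
  (∀ a, 0 ≤ p a) ∧ ∑ a, p a = 1

/-- A channel (row-stochastic kernel) from `α` to the finite alphabet `𝒴`. -/
def IsChannel {α 𝒴 : Type*} [Fintype α] [Fintype 𝒴] (W : α → 𝒴 → ℝ) : Prop :=
  ∀ x, IsDist (W x)

/-- Total variation distance between mass functions on a finite type. -/
noncomputable def tvDist {α : Type*} [Fintype α] (p q : α → ℝ) : ℝ :=
  (∑ a, |p a - q a|) / 2

/-- The element `2i-1` (1-indexed) of `[2k]`, i.e. index `2i` in 0-indexed terms. -/
def lo {k : ℕ} (i : Fin k) : Fin (2 * k) := ⟨2 * i.val, by have := i.isLt; omega⟩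

/-- The element `2i` (1-indexed) of `[2k]`, i.e. index `2i+1` in 0-indexed terms. -/
def hi {k : ℕ} (i : Fin k) : Fin (2 * k) := ⟨2 * i.val + 1, by have := i.isLt; omega⟩

/-- The channel information matrix `H(W)`  (division by `0` yields `0` in Lean,
matching the convention that terms with zero denominator vanish). -/
noncomputable def HMat (k : ℕ) {𝒴 : Type*} [Fintype 𝒴] (W : Fin (2 * k) → 𝒴 → ℝ) :
    Matrix (Fin k) (Fin k) ℝ := fun i j =>
  ∑ y, (W (lo i) y - W (hi i) y) * (W (lo j) y - W (hi j) y) / (∑ x, W x y)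

/-- Nuclear norm of a real symmetric matrix (sum of absolute values of eigenvalues). -/
noncomputable def nucNorm {k : ℕ} (A : Matrix (Fin k) (Fin k) ℝ) : ℝ :=
  if h : A.IsHermitian then ∑ i, |h.eigenvalues i| else 0

/-- Operator (spectral) norm of a real symmetric matrix. -/
noncomputable def opNorm {k : ℕ} (A : Matrix (Fin k) (Fin k) ℝ) : ℝ :=
  if h : A.IsHermitian then ⨆ i, |h.eigenvalues i| else 0

/-- Frobenius norm of a matrix. -/
noncomputable def frobNorm {k : ℕ} (A : Matrix (Fin k) (Fin k) ℝ) : ℝ :=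
  Real.sqrt (∑ i, ∑ j, (A i j) ^ 2)

/-- `‖𝒲‖_*`, the maximal nuclear norm of `H(W)` over the family. -/
noncomputable def famNuc (k : ℕ) {𝒴 : Type*} [Fintype 𝒴]
    (𝒲 : Set (Fin (2 * k) → 𝒴 → ℝ)) : ℝ :=
  sSup ((fun W => nucNorm (HMat k W)) '' 𝒲)

/-- `‖𝒲‖_op`, the maximal operator norm of `H(W)` over the family. -/
noncomputable def famOp (k : ℕ) {𝒴 : Type*} [Fintype 𝒴]
    (𝒲 : Set (Fin (2 * k) → 𝒴 → ℝ)) : ℝ :=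
  sSup ((fun W => opNorm (HMat k W)) '' 𝒲)

/-- `‖𝒲‖_F`, the maximal Frobenius norm of `H(W)` over the family. -/
noncomputable def famFrob (k : ℕ) {𝒴 : Type*} [Fintype 𝒴]
    (𝒲 : Set (Fin (2 * k) → 𝒴 → ℝ)) : ℝ :=
  sSup ((fun W => frobNorm (HMat k W)) '' 𝒲)

/-- A deterministic sequentially interactive protocol over `n` users: to each user `t`
and each message prefix it assigns a channel. -/
def Protocol (k n : ℕ) (𝒴 : Type*) : Type _ :=
  (t : Fin n) → (Fin t.val → 𝒴) → Fin (2 * k) → 𝒴 → ℝ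

/-- All channels used by the protocol belong to the family `𝒲`. -/
def UsesFamily {k n : ℕ} {𝒴 : Type*} (π : Protocol k n 𝒴)
    (𝒲 : Set (Fin (2 * k) → 𝒴 → ℝ)) : Prop :=
  ∀ t pre, π t pre ∈ 𝒲

/-- All kernels used by the protocol are genuine channels. -/
def ChannelProtocol {k n : ℕ} {𝒴 : Type*} [Fintype 𝒴] (π : Protocol k n 𝒴) : Prop :=
  ∀ t pre, IsChannel (π t pre)

/-- Distribution of the first `t` messages of the transcript when the inputs are
i.i.d. with law `p`. -/
noncomputable def prefixDist {k n : ℕ} {𝒴 : Type*} [Fintype 𝒴] (π : Protocol k n 𝒴)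
    (p : Fin (2 * k) → ℝ) (t : ℕ) (ht : t ≤ n) (y : Fin t → 𝒴) : ℝ :=
  ∏ s : Fin t, ∑ x, p x *
    π ⟨s.val, lt_of_lt_of_le s.isLt ht⟩ (fun r => y ⟨r.val, lt_trans r.isLt s.isLt⟩) x (y s)

/-- Distribution of the full transcript `Y^n` when the inputs are i.i.d. with law `p`. -/
noncomputable def transDist {k n : ℕ} {𝒴 : Type*} [Fintype 𝒴] (π : Protocol k n 𝒴)
    (p : Fin (2 * k) → ℝ) (y : Fin n → 𝒴) : ℝ :=
  prefixDist π p n le_rfl y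

/-- The uniform distribution on `[2k]`. -/
noncomputable def uniform2k (k : ℕ) : Fin (2 * k) → ℝ := fun _ => (2 * (k : ℝ))⁻¹

/-- An `(n, ε)`-estimator using `𝒲`: a public-coin sequentially interactive protocol
(seed distribution `μ`, protocols `π u`, channels from `𝒲`) together with an estimator
`est` such that, for every input distribution `p`, the probability that the estimate is
more than `ε` away from `p` in total variation is at most `1/100`. -/
def IsEstimator {k n : ℕ} {𝒴 𝒰 : Type*} [Fintype 𝒴] [Fintype 𝒰]
    (𝒲 : Set (Fin (2 * k) → 𝒴 → ℝ)) (μ : 𝒰 → ℝ) (π : 𝒰 → Protocol k n 𝒴)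
    (est : (Fin n → 𝒴) → 𝒰 → Fin (2 * k) → ℝ) (ε : ℝ) : Prop :=
  IsDist μ ∧ (∀ u, UsesFamily (π u) 𝒲) ∧ (∀ u, ChannelProtocol (π u)) ∧
  (∀ y u, IsDist (est y u)) ∧
  ∀ p : Fin (2 * k) → ℝ, IsDist p →
    (∑ u, ∑ y : Fin n → 𝒴, μ u * (transDist (π u) p y *
      (if ε < tvDist (est y u) p then (1 : ℝ) else 0))) ≤ 1 / 100

/-- An `(n, ε)`-uniformity test using `𝒲`: a public-coin sequentially interactive
protocol together with a randomized decision rule `T` (probability of output `1`)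
accepting uniform and rejecting `ε`-far distributions with probability `99/100`. -/
def IsUnifTest {k n : ℕ} {𝒴 𝒰 : Type*} [Fintype 𝒴] [Fintype 𝒰]
    (𝒲 : Set (Fin (2 * k) → 𝒴 → ℝ)) (μ : 𝒰 → ℝ) (π : 𝒰 → Protocol k n 𝒴)
    (T : (Fin n → 𝒴) → 𝒰 → ℝ) (ε : ℝ) : Prop :=
  IsDist μ ∧ (∀ u, UsesFamily (π u) 𝒲) ∧ (∀ u, ChannelProtocol (π u)) ∧
  (∀ y u, T y u ∈ Set.Icc (0 : ℝ) 1) ∧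
  (99 / 100 ≤ ∑ u, ∑ y : Fin n → 𝒴, μ u * (transDist (π u) (uniform2k k) y * (1 - T y u))) ∧
  ∀ p : Fin (2 * k) → ℝ, IsDist p → ε ≤ tvDist p (uniform2k k) →
    99 / 100 ≤ ∑ u, ∑ y : Fin n → 𝒴, μ u * (transDist (π u) p y * T y u)

/-- Mutual information (in nats) of a joint mass function on `A × B`. -/
noncomputable def miNats {A B : Type*} [Fintype A] [Fintype B] (j : A → B → ℝ) : ℝ :=
  ∑ a, ∑ b, j a b * Real.log (j a b / ((∑ b', j a b') * (∑ a', j a' b)))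

/-- Mutual information (in bits) of a joint mass function on `A × B`. -/
noncomputable def miBits {A B : Type*} [Fintype A] [Fintype B] (j : A → B → ℝ) : ℝ :=
  ∑ a, ∑ b, j a b * Real.logb 2 (j a b / ((∑ b', j a b') * (∑ a', j a' b)))

/-- Binary entropy function (in bits). -/
noncomputable def binEnt (t : ℝ) : ℝ :=
  -(t * Real.logb 2 t) - (1 - t) * Real.logb 2 (1 - t)

/-- `±1` encoding of a Boolean. -/
def pm (b : Bool) : ℝ := if b then 1 else -1

/-- The joint mass function of `(Z_i, Y)` obtained from a joint mass function of `(Z, Y)`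
for `Z ∈ {−1,+1}^k` (encoded via Booleans). -/
noncomputable def coordJoint {k : ℕ} {𝒴 : Type*} [Fintype 𝒴]
    (j : (Fin k → Bool) → 𝒴 → ℝ) (i : Fin k) : Bool → 𝒴 → ℝ :=
  fun b y => ∑ z : Fin k → Bool, if z i = b then j z y else 0

/-- The Paninski perturbation `p_z` of the uniform distribution on `[2k]`:
`p_z(2i−1) = (1+2ε z_i)/(2k)` and `p_z(2i) = (1−2ε z_i)/(2k)` (1-indexed). -/
noncomputable def paninski (k : ℕ) (ε : ℝ) (z : Fin k → Bool) : Fin (2 * k) → ℝ :=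
  fun x => (1 + (if x.val % 2 = 0 then (1 : ℝ) else -1) * (2 * ε) *
    pm (z ⟨x.val / 2, by have := x.isLt; omega⟩)) / (2 * k)

/-- Chi-square divergence between mass functions on a finite type. -/
noncomputable def chiSq {α : Type*} [Fintype α] (P Q : α → ℝ) : ℝ :=
  ∑ y, (P y - Q y) ^ 2 / Q y

/-- Kullback–Leibler divergence (in nats) between mass functions on a finite type. -/
noncomputable def klDivNats {α : Type*} [Fintype α] (P Q : α → ℝ) : ℝ :=
  ∑ y, P y * Real.log (P y / Q y)

/-- The leaky-query channel `W_u^η` on output alphabet `[2k] ∪ {1*, 0*}`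
(`Sum.inr true = 1*`, `Sum.inr false = 0*`). -/
noncomputable def leaky (k : ℕ) (η : ℝ) (u : Fin (2 * k) → ℝ) :
    Fin (2 * k) → (Fin (2 * k) ⊕ Bool) → ℝ :=
  fun x y => Sum.elim (fun x' => if x' = x then η else 0)
    (fun b => if b then (1 - η) * u x else (1 - η) * (1 - u x)) y

/-- The vector `δ(u)` associated with a leaky-query channel. -/
noncomputable def leakyDelta (k : ℕ) (u : Fin (2 * k) → ℝ) : Fin k → ℝ :=
  fun i => (u (lo i) - u (hi i)) *
    Real.sqrt ((2 * (k : ℝ)) / ((∑ x, u x) * (2 * (k : ℝ) - ∑ x, u x)))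

/-- The partial-erasure channel `W_{x*}` on output alphabet `[2k] ∪ {⊥}`. -/
noncomputable def eraseCh (k : ℕ) (η : ℝ) (xs : Fin (2 * k)) :
    Fin (2 * k) → (Fin (2 * k) ⊕ Unit) → ℝ :=
  fun x y => Sum.elim (fun x' => if x' = x then (if x = xs then 1 else η) else 0)
    (fun _ => if x = xs then 0 else 1 - η) y

/-- The family of all `ρ`-locally differentially private channels from `[2k]` to `𝒴`. -/
def ldpFamily (k : ℕ) {𝒴 : Type*} [Fintype 𝒴] (ρ : ℝ) :
    Set (Fin (2 * k) → 𝒴 → ℝ) :=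
  { W | IsChannel W ∧ ∀ x x' y, W x y ≤ Real.exp ρ * W x' y }

open Matrix

theorem _root_.Matrix.IsHermitian.dotProduct_mulVec_le {n : Type*} [Fintype n] [DecidableEq n]
    {A : Matrix n n ℝ} (hA : A.IsHermitian) {c : ℝ} (hc : ∀ i, hA.eigenvalues i ≤ c)
    (v : n → ℝ) : v ⬝ᵥ A *ᵥ v ≤ c * (v ⬝ᵥ v) := by
  set U : Matrix n n ℝ := (hA.eigenvectorUnitary : Matrix n n ℝ)
  have hshift : c • 1 - A = U * diagonal (fun i => c - hA.eigenvalues i) * star U := by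
    have hUU : U * star U = 1 := Unitary.coe_mul_star_self _
    have hdiag : diagonal (fun i => c - hA.eigenvalues i) = c • 1 - diagonal hA.eigenvalues := by
      rw [smul_one_eq_diagonal, diagonal_sub]
    conv_lhs => rw [hA.spectral_theorem]
    rw [Unitary.conjStarAlgAut_apply, hdiag, mul_sub, sub_mul, mul_smul_comm, mul_one,
      smul_mul_assoc, hUU]
    rfl
  have hpsd : (c • 1 - A).PosSemidef := by
    rw [hshift, star_eq_conjTranspose]
    exact (posSemidef_diagonal_iff.mpr fun i => sub_nonneg.mpr (hc i)).mul_mul_conjTranspose_same U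
  have := hpsd.dotProduct_mulVec_nonneg v
  simp only [star_trivial, sub_mulVec, smul_mulVec, one_mulVec, dotProduct_sub, dotProduct_smul,
    smul_eq_mul] at this
  linarith

theorem dotProduct_mulVec_le_opNorm_mul {k : ℕ} {A : Matrix (Fin k) (Fin k) ℝ}
    (hA : A.IsHermitian) (v : Fin k → ℝ) : v ⬝ᵥ A *ᵥ v ≤ opNorm A * (v ⬝ᵥ v) := by
  have hbdd : BddAbove (Set.range fun i => |hA.eigenvalues i|) := (Set.finite_range _).bddAbove
  rw [opNorm, dif_pos hA]
  exact hA.dotProduct_mulVec_le (fun i => (le_abs_self _).trans (le_ciSup hbdd i)) v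

theorem sum_sum_mul_eq_dotProduct_mulVec {n : Type*} [Fintype n] (A : Matrix n n ℝ)
    (v : n → ℝ) : ∑ i, ∑ j, v i * A i j * v j = v ⬝ᵥ A *ᵥ v := by
  simp only [dotProduct, mulVec, Finset.mul_sum, mul_assoc]

theorem sum_sum_mul_gram_mul_eq_sum_sq_div {ι 𝒴 : Type*} [Fintype ι] [Fintype 𝒴]
    (d : ι → 𝒴 → ℝ) (s : 𝒴 → ℝ) (v : ι → ℝ) :
    ∑ i, ∑ j, v i * (∑ y, d i y * d j y / s y) * v j = ∑ y, (∑ i, v i * d i y) ^ 2 / s y := by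
  have hterm : ∀ i j, v i * (∑ y, d i y * d j y / s y) * v j
      = ∑ y, v i * d i y * (v j * d j y) / s y := fun i j => by
    rw [Finset.mul_sum, Finset.sum_mul]
    exact Finset.sum_congr rfl fun y _ => by ring
  simp only [hterm, sq, Finset.sum_mul_sum, Finset.sum_div]
  conv_rhs => rw [Finset.sum_comm]
  exact Finset.sum_congr rfl fun i _ => Finset.sum_comm

theorem isHermitian_HMat (k : ℕ) {𝒴 : Type*} [Fintype 𝒴] (W : Fin (2 * k) → 𝒴 → ℝ) :
    (HMat k W).IsHermitian := by
  ext i j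
  exact Finset.sum_congr rfl fun y _ => by ring

theorem chiSq_eq_mul {α : Type*} [Fintype α] {P Q a s : α → ℝ} {c : ℝ}
    (hsub : ∀ y, P y - Q y = c * a y) (hQ : ∀ y, Q y = c * s y) :
    chiSq P Q = c * ∑ y, a y ^ 2 / s y := by
  rw [chiSq, Finset.mul_sum]
  refine Finset.sum_congr rfl fun y _ => ?_
  rw [hsub, hQ]
  rcases eq_or_ne c 0 with rfl | hc
  · simp
  rw [mul_pow, sq c, mul_assoc, mul_div_mul_left _ _ hc, mul_div_assoc]

theorem sum_eq_sum_lo_add_hi {M : Type*} [AddCommMonoid M] {k : ℕ} (f : Fin (2 * k) → M) :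
    ∑ x, f x = ∑ i : Fin k, (f (lo i) + f (hi i)) := by
  rw [← (finProdFinEquiv.trans (finCongr (Nat.mul_comm k 2))).sum_comp, Fintype.sum_prod_type]
  refine Finset.sum_congr rfl fun i _ => ?_
  rw [Fin.sum_univ_two]
  congr 2 <;> ext <;> simp [lo, hi, add_comm]

theorem sum_mul_sub_sum_uniform_mul {k : ℕ} {p : Fin (2 * k) → ℝ}
    (hpair : ∀ i : Fin k, p (lo i) + p (hi i) = 1 / (k : ℝ)) (f : Fin (2 * k) → ℝ) :
    ∑ x, p x * f x - ∑ x, uniform2k k x * f x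
      = (2 * (k : ℝ))⁻¹ * ∑ i, (k : ℝ) * (p (lo i) - p (hi i)) * (f (lo i) - f (hi i)) := by
  rw [← sum_sub_distrib, sum_eq_sum_lo_add_hi, Finset.mul_sum]
  refine Finset.sum_congr rfl fun i _ => ?_
  have hk : (k : ℝ) ≠ 0 := Nat.cast_ne_zero.mpr (Fin.pos i).ne'
  have hhi : p (hi i) = 1 / k - p (lo i) := by linear_combination hpair i
  simp only [uniform2k]
  rw [hhi]
  field_simp
  ring

theorem chisq_quadratic_form_general
    (k : ℕ) (𝒴 : Type) [Fintype 𝒴]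
    (W : Fin (2 * k) → 𝒴 → ℝ)
    (p : Fin (2 * k) → ℝ)
    (hpair : ∀ i : Fin k, p (lo i) + p (hi i) = 1 / (k : ℝ)) :
    chiSq (fun y => ∑ x, p x * W x y) (fun y => ∑ x, uniform2k k x * W x y)
        = (1 / (2 * (k : ℝ))) *
            ∑ i : Fin k, ∑ i' : Fin k,
              ((k : ℝ) * (p (lo i) - p (hi i))) * HMat k W i i' *
                ((k : ℝ) * (p (lo i') - p (hi i'))) ∧
      chiSq (fun y => ∑ x, p x * W x y) (fun y => ∑ x, uniform2k k x * W x y)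
        ≤ (1 / (2 * (k : ℝ))) * opNorm (HMat k W) *
            ∑ i : Fin k, ((k : ℝ) * (p (lo i) - p (hi i))) ^ 2 := by
  set v : Fin k → ℝ := fun i => (k : ℝ) * (p (lo i) - p (hi i))
  have hchi : chiSq (fun y => ∑ x, p x * W x y) (fun y => ∑ x, uniform2k k x * W x y)
      = (1 / (2 * (k : ℝ))) * ∑ i, ∑ i', v i * HMat k W i i' * v i' := by
    rw [one_div, chiSq_eq_mul (a := fun y => ∑ i, v i * (W (lo i) y - W (hi i) y))
      (s := fun y => ∑ x, W x y) (fun y => sum_mul_sub_sum_uniform_mul hpair (W · y))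
      (fun y => by simp only [uniform2k, Finset.mul_sum]), ← sum_sum_mul_gram_mul_eq_sum_sq_div]
    rfl
  refine ⟨hchi, ?_⟩
  rw [hchi, mul_assoc, sum_sum_mul_eq_dotProduct_mulVec]
  gcongr
  simpa only [dotProduct, sq] using dotProduct_mulVec_le_opNorm_mul (isHermitian_HMat k W) v

/-- For a channel `W` and a distribution `p` on `[2k]` with
`p(2i−1) + p(2i) = 1/k` for all `i`, setting `v_i = k (p(2i−1) − p(2i))`,
`χ²(W∘p ‖ W∘u) = (1/(2k)) vᵀ H(W) v ≤ (1/(2k)) ‖H(W)‖_op ‖v‖₂²`. -/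
theorem chisq_quadratic_form
    (k : ℕ) (hk : 1 ≤ k) (𝒴 : Type) [Fintype 𝒴]
    (W : Fin (2 * k) → 𝒴 → ℝ) (hW : IsChannel W)
    (p : Fin (2 * k) → ℝ) (hp : IsDist p)
    (hpair : ∀ i : Fin k, p (lo i) + p (hi i) = 1 / (k : ℝ)) :
    chiSq (fun y => ∑ x, p x * W x y) (fun y => ∑ x, uniform2k k x * W x y)
        = (1 / (2 * (k : ℝ))) *
            ∑ i : Fin k, ∑ i' : Fin k,
              ((k : ℝ) * (p (lo i) - p (hi i))) * HMat k W i i' *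
                ((k : ℝ) * (p (lo i') - p (hi i'))) ∧
      chiSq (fun y => ∑ x, p x * W x y) (fun y => ∑ x, uniform2k k x * W x y)
        ≤ (1 / (2 * (k : ℝ))) * opNorm (HMat k W) *
            ∑ i : Fin k, ((k : ℝ) * (p (lo i) - p (hi i))) ^ 2 :=
  chisq_quadratic_form_general k 𝒴 W p hpair

end Paper
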